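/- arXiv:1712.05538 — 2 statements merged into one kernel-verified Lean document; each statement's English description precedes it below -/
import Mathlib

section
/- Let G be a finite connected bipartite simple graph with at least one edge. Let ôdiam := max over all pairs of vertices u, v of Ô(u,v), and let Δ := max, over all quadruples of vertices (i, i', j, j') with i adjacent to i' and j adjacent to j', of min{Ô(i,j), Ô(i,j'), Ô(i',j), Ô(i',j')}. Then Δ = ôdiam − 2 if and only if for all vertices i, j with Ô(i,j) = ôdiam and for all vertices i' adjacent to i and j' adjacent to j one has Ô(i',j') = ôdiam − 2; otherwise Δ = ôdiam − 1. -/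
open SimpleGraph

/-- The oriented distance: the graph distance plus one. -/
noncomputable def orientedDist {α : Type*} (G : SimpleGraph α) (u v : α) : ℕ :=
  G.dist u v + 1

/-- `ôdiam`: the maximum oriented distance over all pairs of vertices. -/
noncomputable def oDiam {α : Type*} (G : SimpleGraph α) : ℕ :=
  sSup {m : ℕ | ∃ u v : α, orientedDist G u v = m}

/-- The minimum of the four oriented distances determined by a quadruple `(i,i',j,j')`. -/
noncomputable def quadMin {α : Type*} (G : SimpleGraph α) (i i' j j' : α) : ℕ :=
  min (min (orientedDist G i j) (orientedDist G i j'))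
    (min (orientedDist G i' j) (orientedDist G i' j'))

/-- `Δ`: the maximum, over all quadruples `(i,i',j,j')` with `i` adjacent to `i'` and `j`
adjacent to `j'`, of `min{Ô(i,j), Ô(i,j'), Ô(i',j), Ô(i',j')}`. -/
noncomputable def linkDiam {α : Type*} (G : SimpleGraph α) : ℕ :=
  sSup {m : ℕ | ∃ i i' j j' : α, G.Adj i i' ∧ G.Adj j j' ∧ quadMin G i i' j j' = m}

lemma walk_parity {α : Type*} {G : SimpleGraph α} (c : G.Coloring (ZMod 2)) {u v : α}
    (p : G.Walk u v) : (p.length : ZMod 2) = c u + c v := by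
  induction p with
  | nil => simp [show ∀ a : ZMod 2, a + a = 0 by decide]
  | @cons u w v h p ih =>
    have hne := c.valid h
    have h2 : ∀ a b : ZMod 2, a ≠ b → a = b + 1 := by decide
    simp only [SimpleGraph.Walk.length_cons, Nat.cast_add, Nat.cast_one, ih]
    rw [h2 _ _ hne]; ring

lemma dist_parity {α : Type*} {G : SimpleGraph α} (hconn : G.Connected)
    (c : G.Coloring (ZMod 2)) (u v : α) : ((G.dist u v : ℕ) : ZMod 2) = c u + c v := by
  obtain ⟨p, hp⟩ := hconn.exists_walk_length_eq_dist u v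
  rw [← hp]; exact walk_parity c p

lemma step_one {α : Type*} {G : SimpleGraph α} (hconn : G.Connected)
    (c : G.Coloring (ZMod 2)) {j j' : α} (h : G.Adj j j') (i : α) :
    G.dist i j' = G.dist i j + 1 ∨ G.dist i j = G.dist i j' + 1 := by
  have h1 : G.dist i j' ≤ G.dist i j + 1 := by
    have := hconn.dist_triangle (u := i) (v := j) (w := j')
    have hd : G.dist j j' = 1 := dist_eq_one_iff_adj.mpr h
    omega
  have h2 : G.dist i j ≤ G.dist i j' + 1 := by
    have := hconn.dist_triangle (u := i) (v := j') (w := j)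
    have hd : G.dist j' j = 1 := dist_eq_one_iff_adj.mpr h.symm
    omega
  have hne : G.dist i j ≠ G.dist i j' := by
    intro heq
    have p1 := dist_parity hconn c i j
    have p2 := dist_parity hconn c i j'
    rw [heq, p2] at p1
    exact c.valid h (add_left_cancel p1).symm
  omega

lemma step_one_left {α : Type*} {G : SimpleGraph α} (hconn : G.Connected)
    (c : G.Coloring (ZMod 2)) {i i' : α} (h : G.Adj i i') (j : α) :
    G.dist i' j = G.dist i j + 1 ∨ G.dist i j = G.dist i' j + 1 := by
  have := step_one hconn c h j
  simpa [SimpleGraph.dist_comm] using this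

lemma quadMin_le₁ {α : Type*} (G : SimpleGraph α) (i i' j j' : α) :
    quadMin G i i' j j' ≤ orientedDist G i j :=
  le_trans (min_le_left _ _) (min_le_left _ _)

lemma quadMin_le₂ {α : Type*} (G : SimpleGraph α) (i i' j j' : α) :
    quadMin G i i' j j' ≤ orientedDist G i j' :=
  le_trans (min_le_left _ _) (min_le_right _ _)

lemma quadMin_le₃ {α : Type*} (G : SimpleGraph α) (i i' j j' : α) :
    quadMin G i i' j j' ≤ orientedDist G i' j :=
  le_trans (min_le_right _ _) (min_le_left _ _)

lemma quadMin_le₄ {α : Type*} (G : SimpleGraph α) (i i' j j' : α) :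
    quadMin G i i' j j' ≤ orientedDist G i' j' :=
  le_trans (min_le_right _ _) (min_le_right _ _)

lemma le_quadMin {α : Type*} (G : SimpleGraph α) (i i' j j' : α) {a : ℕ}
    (h1 : a ≤ orientedDist G i j) (h2 : a ≤ orientedDist G i j')
    (h3 : a ≤ orientedDist G i' j) (h4 : a ≤ orientedDist G i' j') :
    a ≤ quadMin G i i' j j' :=
  le_min (le_min h1 h2) (le_min h3 h4)

/-- `Δ = ôdiam − 2` iff for all vertices `i, j` with `Ô(i,j) = ôdiam` and all `i'`
adjacent to `i` and `j'` adjacent to `j` one has `Ô(i',j') = ôdiam − 2`; otherwise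
`Δ = ôdiam − 1`. -/
theorem linkDiam_eq_oDiam_sub_two_iff {α : Type*} [Fintype α] (G : SimpleGraph α)
    (hconn : G.Connected) (hbip : G.Colorable 2) (hedge : G.edgeSet.Nonempty) :
    (linkDiam G + 2 = oDiam G ↔
      ∀ i j : α, orientedDist G i j = oDiam G →
        ∀ i' j' : α, G.Adj i i' → G.Adj j j' →
          orientedDist G i' j' + 2 = oDiam G) ∧
    ((¬ ∀ i j : α, orientedDist G i j = oDiam G →
        ∀ i' j' : α, G.Adj i i' → G.Adj j j' →
          orientedDist G i' j' + 2 = oDiam G) →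
      linkDiam G + 1 = oDiam G) := by
  classical
  obtain ⟨e, he⟩ := hedge
  induction e with | _ a b =>
  rw [SimpleGraph.mem_edgeSet] at he
  -- a coloring
  obtain ⟨c0⟩ := hbip
  let c : G.Coloring (ZMod 2) := c0
  -- bounds on orientedDist
  have hOle : ∀ u v : α, orientedDist G u v ≤ Fintype.card α + 1 := by
    intro u v
    obtain ⟨p, hp, hl⟩ := hconn.exists_path_of_dist u v
    have := hp.length_lt
    unfold orientedDist; omega
  -- the set for oDiam
  have hOne : {m : ℕ | ∃ u v : α, orientedDist G u v = m}.Nonempty :=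
    ⟨orientedDist G a b, a, b, rfl⟩
  have hObdd : BddAbove {m : ℕ | ∃ u v : α, orientedDist G u v = m} :=
    ⟨Fintype.card α + 1, by rintro m ⟨u, v, rfl⟩; exact hOle u v⟩
  have hOmem : ∃ u v : α, orientedDist G u v = oDiam G := Nat.sSup_mem hOne hObdd
  have hOub : ∀ u v : α, orientedDist G u v ≤ oDiam G := fun u v =>
    le_csSup hObdd ⟨u, v, rfl⟩
  have hD2 : 2 ≤ oDiam G := by
    have hd : G.dist a b = 1 := dist_eq_one_iff_adj.mpr he
    have := hOub a b
    unfold orientedDist at this; omega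
  set D := oDiam G with hDdef
  -- the set for linkDiam
  have hLne : {m : ℕ | ∃ i i' j j' : α, G.Adj i i' ∧ G.Adj j j' ∧ quadMin G i i' j j' = m}.Nonempty :=
    ⟨quadMin G a b a b, a, b, a, b, he, he, rfl⟩
  have hLbdd : BddAbove {m : ℕ | ∃ i i' j j' : α, G.Adj i i' ∧ G.Adj j j' ∧ quadMin G i i' j j' = m} := by
    refine ⟨Fintype.card α + 1, ?_⟩
    rintro m ⟨i, i', j, j', hii, hjj, rfl⟩
    have := hOle i j
    calc quadMin G i i' j j' ≤ orientedDist G i j := by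
          unfold quadMin; omega
      _ ≤ _ := this
  have hLmem : ∃ i i' j j' : α, G.Adj i i' ∧ G.Adj j j' ∧ quadMin G i i' j j' = linkDiam G :=
    Nat.sSup_mem hLne hLbdd
  have hLub : ∀ i i' j j' : α, G.Adj i i' → G.Adj j j' → quadMin G i i' j j' ≤ linkDiam G :=
    fun i i' j j' hii hjj => le_csSup hLbdd ⟨i, i', j, j', hii, hjj, rfl⟩
  -- upper bound: linkDiam + 1 ≤ D
  have hupper : linkDiam G + 1 ≤ D := by
    have : linkDiam G ∈ {m : ℕ | ∃ i i' j j' : α, G.Adj i i' ∧ G.Adj j j' ∧ quadMin G i i' j j' = m} :=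
      Nat.sSup_mem hLne hLbdd
    obtain ⟨i, i', j, j', hii, hjj, hq⟩ := this
    have hs := step_one hconn c hjj i
    have h1 := hOub i j
    have h2 := hOub i j'
    have q1 := quadMin_le₁ G i i' j j'
    have q2 := quadMin_le₂ G i i' j j'
    rw [hq] at q1 q2
    unfold orientedDist at h1 h2 q1 q2
    omega
  -- lower bound: D ≤ linkDiam + 2
  have hlower : D ≤ linkDiam G + 2 := by
    obtain ⟨u, v, huv⟩ := hOmem
    have hdpos : 1 ≤ G.dist u v := by unfold orientedDist at huv; omega
    have hne : u ≠ v := by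
      intro h; subst h
      rw [SimpleGraph.dist_self] at hdpos; omega
    -- neighbors
    obtain ⟨p, hp⟩ := (hconn u v).exists_walk_length_eq_dist
    have hu' : ∃ u', G.Adj u u' := by
      cases p with
      | nil => exact absurd rfl hne
      | cons h _ => exact ⟨_, h⟩
    obtain ⟨u', hu'⟩ := hu'
    have hv' : ∃ v', G.Adj v v' := by
      obtain ⟨q, hq⟩ := (hconn v u).exists_walk_length_eq_dist
      cases q with
      | nil => exact absurd rfl hne.symm
      | cons h _ => exact ⟨_, h⟩
    obtain ⟨v', hv'⟩ := hv'
    have hub := hLub u u' v v' hu' hv'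
    have t1 := step_one hconn c hv' u
    have t2 := step_one_left hconn c hu' v
    have t3 := step_one hconn c hv' u'
    have t4 := step_one_left hconn c hu' v'
    have hge : orientedDist G u v - 2 ≤ quadMin G u u' v v' := by
      apply le_quadMin <;> unfold orientedDist <;> omega
    unfold orientedDist at huv hge
    omega
  -- the two-step lemma instantiation
  have twostep : ∀ i i' j j' : α, G.Adj i i' → G.Adj j j' →
      G.dist i' j' + 2 = G.dist i j ∨ G.dist i' j' = G.dist i j ∨
        G.dist i' j' = G.dist i j + 2 := by
    intro i i' j j' hii hjj
    have t1 := step_one_left hconn c hii j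
    have t2 := step_one hconn c hjj i'
    omega
  have hiff : (linkDiam G + 2 = D ↔
      ∀ i j : α, orientedDist G i j = D →
        ∀ i' j' : α, G.Adj i i' → G.Adj j j' →
          orientedDist G i' j' + 2 = D) := by
    constructor
    · -- forward
      intro hL i j hij i' j' hii hjj
      have hts := twostep i i' j j' hii hjj
      have hub' := hOub i' j'
      unfold orientedDist at hij hub' ⊢
      rcases hts with h | h | h
      · omega
      · exfalso
        have hub := hLub i i' j j' hii hjj
        have t1 := step_one hconn c hjj i
        have t2 := step_one_left hconn c hii j
        have hge : D - 1 ≤ quadMin G i i' j j' := by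
          apply le_quadMin <;> unfold orientedDist <;> omega
        omega
      · omega
    · -- backward
      intro hcond
      by_contra hne2
      obtain ⟨i, i', j, j', hii, hjj, hq⟩ := hLmem
      have hs := step_one hconn c hjj i
      have h1 := hOub i j
      have h2 := hOub i j'
      have q1 := quadMin_le₁ G i i' j j'
      have q2 := quadMin_le₂ G i i' j j'
      have q3 := quadMin_le₃ G i i' j j'
      have q4 := quadMin_le₄ G i i' j j'
      rw [hq] at q1 q2 q3 q4
      have hgl1 : linkDiam G ≤ orientedDist G i j := by
        have := hLub i i' j j' hii hjj
        omega
      have hcase : orientedDist G i j = D ∨ orientedDist G i j' = D := by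
        unfold orientedDist at hs h1 h2 q1 q2 ⊢
        omega
      rcases hcase with h | h
      · have := hcond i j h i' j' hii hjj
        unfold orientedDist at this q4
        omega
      · have := hcond i j' h i' j hii hjj.symm
        unfold orientedDist at this q3
        omega
  refine ⟨hiff, fun hcond => ?_⟩
  have : ¬ (linkDiam G + 2 = D) := fun h => hcond (hiff.mp h)
  omega
end

section
/- Assume P, H, V, Θ and Ô are as in the context, assume the generic-points property (for every h ∈ H and v ∈ V with h ∩ v ≠ ∅ there exists a point of h ∩ v belonging to no member of H ∪ V other than h and v), and assume the graph diameter of Θ is at least 3 (equivalently ôdiam ≥ 4). If there exist vertices i, i', j, j' of Θ with i adjacent to i' and j adjacent to j' such that Ô(i,j) = ôdiam and Ô(i',j') = ôdiam, then diam(P) = ôdiam − 1; otherwise diam(P) = ôdiam − 2. -/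
/-- A segment with endpoints `p` and `q` is axis-parallel: horizontal (equal
`y`-coordinates) or vertical (equal `x`-coordinates). -/
def AxisParallel (p q : ℝ × ℝ) : Prop := p.2 = q.2 ∨ p.1 = q.1

/-- `f` describes a rectilinear path from `p` to `q` in `P` with `k ≥ 1` links:
`f 0 = p`, `f k = q`, and each closed segment from `f t` to `f (t+1)` is contained
in `P` and is axis-parallel. -/
def IsRectPath (P : Set (ℝ × ℝ)) (p q : ℝ × ℝ) (k : ℕ) (f : ℕ → ℝ × ℝ) : Prop :=
  1 ≤ k ∧ f 0 = p ∧ f k = q ∧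
    ∀ t < k, segment ℝ (f t) (f (t + 1)) ⊆ P ∧ AxisParallel (f t) (f (t + 1))

/-- The rectilinear link distance: the minimum link length of a rectilinear path
from `p` to `q` in `P`. -/
noncomputable def rld (P : Set (ℝ × ℝ)) (p q : ℝ × ℝ) : ℕ :=
  sInf {k : ℕ | ∃ f : ℕ → ℝ × ℝ, IsRectPath P p q k f}

/-- A box: a closed axis-aligned rectangle `[a,b] × [c,d]` with `a < b` and `c < d`. -/
def IsBox (B : Set (ℝ × ℝ)) : Prop :=
  ∃ a b c d : ℝ, a < b ∧ c < d ∧ B = Set.Icc a b ×ˢ Set.Icc c d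

/-- The graph of oriented distances `Θ`: the bipartite graph on the (disjoint) union of
the families `H` and `V`, with an edge between `h ∈ H` and `v ∈ V` exactly when
`h ∩ v ≠ ∅`. -/
def thetaGraph (H V : Set (Set (ℝ × ℝ))) :
    SimpleGraph {B : Set (ℝ × ℝ) // B ∈ H ∪ V} where
  Adj x y := x ≠ y ∧
    ((x.1 ∈ H ∧ y.1 ∈ V) ∨ (x.1 ∈ V ∧ y.1 ∈ H)) ∧ (x.1 ∩ y.1).Nonempty
  symm := by
    constructor
    rintro x y ⟨hxy, hor, hne⟩
    refine ⟨hxy.symm, ?_, by rwa [Set.inter_comm]⟩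
    rcases hor with ⟨h1, h2⟩ | ⟨h1, h2⟩
    · exact Or.inr ⟨h2, h1⟩
    · exact Or.inl ⟨h2, h1⟩
  loopless := by constructor; rintro x ⟨hxx, -⟩; exact hxx rfl

/-- The oriented distance `Ô(i,j)`: the graph distance in `Θ` plus one. -/
noncomputable def oDist (H V : Set (Set (ℝ × ℝ)))
    (i j : {B : Set (ℝ × ℝ) // B ∈ H ∪ V}) : ℕ :=
  (thetaGraph H V).dist i j + 1

/-- `H` and `V` form a good decomposition of `P`: they are finite families of boxes
contained in `P`; every horizontal (resp. vertical) segment contained in `P` lies in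
some member of `H` (resp. `V`); for `h ∈ H` and `v ∈ V` meeting each other, `h ∩ v`
is the product of the `x`-projection of `v` with the `y`-projection of `h`; and the
graph of oriented distances is connected. -/
structure GoodDecomp (P : Set (ℝ × ℝ)) (H V : Set (Set (ℝ × ℝ))) : Prop where
  finH : H.Finite
  finV : V.Finite
  box : ∀ B ∈ H ∪ V, IsBox B
  sub : ∀ B ∈ H ∪ V, B ⊆ P
  covH : ∀ p q : ℝ × ℝ, p.2 = q.2 → segment ℝ p q ⊆ P → ∃ h ∈ H, segment ℝ p q ⊆ h
  covV : ∀ p q : ℝ × ℝ, p.1 = q.1 → segment ℝ p q ⊆ P → ∃ v ∈ V, segment ℝ p q ⊆ v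
  cross : ∀ h ∈ H, ∀ v ∈ V, (h ∩ v).Nonempty →
    h ∩ v = (Prod.fst '' v) ×ˢ (Prod.snd '' h)
  conn : (thetaGraph H V).Connected

/-- `ôdiam`: the maximum of `Ô(i,j)` over all vertices `i, j` of `Θ`. -/
noncomputable def oDiamTheta (H V : Set (Set (ℝ × ℝ))) : ℕ :=
  sSup {m : ℕ | ∃ i j : {B : Set (ℝ × ℝ) // B ∈ H ∪ V}, oDist H V i j = m}

/-- `diam(P)`: the supremum of `rld(p,q)` over all `p, q ∈ P`. -/
noncomputable def rldDiam (P : Set (ℝ × ℝ)) : ℕ :=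
  sSup {m : ℕ | ∃ p ∈ P, ∃ q ∈ P, rld P p q = m}

/-!
A path with `k` links is carried link by link by boxes of `H` (horizontal links) and `V`
(vertical links). Merging consecutive links of equal orientation, the carrying boxes alternate
between `H` and `V` and consecutive ones meet, so they form a walk of length at most `k - 1` in
`Θ`. Conversely, a walk of length `d ≥ 1` from a box containing `p` to one containing `q` yields a
path with `d + 1` links, turning once inside each intersection of consecutive boxes.

Every point lies in a box of `H` and in a box of `V`, which are adjacent in `Θ`. As `Θ` is
bipartite, adjacent vertices are at distances of different parity from any vertex, so of the four
distances between the boxes at `p` and those at `q`, at most two equal `diam Θ`, and only in the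
pattern of the dichotomy. Points lying in exactly two boxes show that the resulting upper bounds
are attained.

Since `diam Θ ≥ 3`, no box lies in both `H` and `V`: such a box would contain every box meeting it
(by crossing, finiteness and connectedness), hence every box, and `Θ` would be a star.
-/

open Set

abbrev ThetaVertex (H V : Set (Set (ℝ × ℝ))) : Type := {B : Set (ℝ × ℝ) // B ∈ H ∪ V}

def HasGenericPoints (H V : Set (Set (ℝ × ℝ))) : Prop :=
  ∀ h ∈ H, ∀ v ∈ V, (h ∩ v).Nonempty → ∃ x ∈ h ∩ v, ∀ B ∈ H ∪ V, x ∈ B → B = h ∨ B = v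

theorem IsPreconnected.subset_of_finite_cover_disjoint {X : Type*} [TopologicalSpace X]
    {s t : Set X} {F : Set (Set X)} (hs : IsPreconnected s) (ht : IsClosed t) (hF : F.Finite)
    (hFc : ∀ A ∈ F, IsClosed A) (hst : (s ∩ t).Nonempty)
    (hcov : ∀ x ∈ s, x ∉ t → ∃ A ∈ F, x ∈ A ∧ Disjoint A t) : s ⊆ t := by
  set u := ⋃ A ∈ {A ∈ F | Disjoint A t}, A
  have hu : IsClosed u := (hF.subset (sep_subset _ _)).isClosed_biUnion fun A hA => hFc A hA.1
  have hut : Disjoint t u := by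
    simp only [u, disjoint_iUnion_right]
    exact fun A hA => hA.2.symm
  have hsu : s ⊆ t ∪ u := fun x hx => by
    by_cases hxt : x ∈ t
    · exact Or.inl hxt
    · obtain ⟨A, hA, hxA, hAt⟩ := hcov x hx hxt
      exact Or.inr (mem_biUnion ⟨hA, hAt⟩ hxA)
  rcases isPreconnected_iff_subset_of_disjoint_closed.1 hs t u ht hu hsu
    (by rw [hut.inter_eq, inter_empty]) with h | h
  · exact h
  · obtain ⟨x, hxs, hxt⟩ := hst
    exact absurd (h hxs) (disjoint_left.1 hut hxt)

namespace SimpleGraph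

variable {α : Type*} {G : SimpleGraph α}

def HasDiametralEdgePair (G : SimpleGraph α) : Prop :=
  ∃ i i' j j', G.Adj i i' ∧ G.Adj j j' ∧ G.dist i j = G.diam ∧ G.dist i' j' = G.diam

theorem Coloring.dist_ne_of_adj (c : G.Coloring Bool) (hG : G.Connected) (u : α) {v w : α}
    (h : G.Adj v w) : G.dist u v ≠ G.dist u w := by
  intro huvw
  obtain ⟨p, hp⟩ := hG.exists_walk_length_eq_dist u v
  obtain ⟨q, hq⟩ := hG.exists_walk_length_eq_dist u w
  have hpar := c.even_length_iff_congr p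
  rw [hp, huvw, ← hq, c.even_length_iff_congr q] at hpar
  exact c.valid h (by cases hv : c v <;> cases hw : c w <;> simp_all)

theorem Connected.dist_le_dist_add_one_right (hG : G.Connected) {v w : α} (h : G.Adj v w)
    (u : α) : G.dist u v ≤ G.dist u w + 1 := by
  simpa [dist_eq_one_iff_adj.2 h.symm] using (hG w v).dist_triangle_right u

theorem Connected.dist_le_dist_add_one_left (hG : G.Connected) {v w : α} (h : G.Adj v w)
    (u : α) : G.dist v u ≤ G.dist w u + 1 := by
  simpa [dist_comm] using hG.dist_le_dist_add_one_right h u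

end SimpleGraph

section Boxes

variable {B : Set (ℝ × ℝ)}

theorem IsBox.isClosed (hB : IsBox B) : IsClosed B := by
  obtain ⟨a, b, c, d, -, -, rfl⟩ := hB
  exact isClosed_Icc.prod isClosed_Icc

theorem IsBox.convex (hB : IsBox B) : Convex ℝ B := by
  obtain ⟨a, b, c, d, -, -, rfl⟩ := hB
  exact (convex_Icc a b).prod (convex_Icc c d)

theorem IsBox.nonempty (hB : IsBox B) : B.Nonempty := by
  obtain ⟨a, b, c, d, hab, hcd, rfl⟩ := hB
  exact ⟨(a, c), ⟨le_rfl, hab.le⟩, ⟨le_rfl, hcd.le⟩⟩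

theorem IsBox.mk_mem (hB : IsBox B) {p q : ℝ × ℝ} (hp : p ∈ B) (hq : q ∈ B) : (q.1, p.2) ∈ B := by
  obtain ⟨a, b, c, d, -, -, rfl⟩ := hB
  exact ⟨hq.1, hp.2⟩

end Boxes

/-- `Aligned true` is horizontal alignment, `Aligned false` vertical alignment. -/
def Aligned : Bool → ℝ × ℝ → ℝ × ℝ → Prop
  | true, a, b => a.2 = b.2
  | false, a, b => a.1 = b.1

def family (H V : Set (Set (ℝ × ℝ))) : Bool → Set (Set (ℝ × ℝ))
  | true => H
  | false => V

theorem family_subset_union (H V : Set (Set (ℝ × ℝ))) (o : Bool) : family H V o ⊆ H ∪ V := by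
  cases o
  · exact subset_union_right
  · exact subset_union_left

section Aligned

variable {a b c : ℝ × ℝ} {o : Bool}

theorem Aligned.axisParallel (h : Aligned o a b) : AxisParallel a b := by
  cases o
  · exact Or.inr h
  · exact Or.inl h

theorem AxisParallel.aligned_or_aligned_not (h : AxisParallel a b) (o : Bool) :
    Aligned o a b ∨ Aligned (!o) a b := by
  cases o <;> rcases h with h | h <;> simp_all [Aligned]

theorem Aligned.trans (hab : Aligned o a b) (hbc : Aligned o b c) : Aligned o a c := by
  cases o
  · exact Eq.trans hab hbc
  · exact Eq.trans hab hbc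

theorem Aligned.segment_subset_union (hab : Aligned o a b) (hbc : Aligned o b c) :
    segment ℝ a c ⊆ segment ℝ a b ∪ segment ℝ b c := by
  obtain ⟨a₁, a₂⟩ := a
  obtain ⟨b₁, b₂⟩ := b
  obtain ⟨c₁, c₂⟩ := c
  cases o
  · obtain ⟨rfl, rfl⟩ : a₁ = b₁ ∧ b₁ = c₁ := ⟨hab, hbc⟩
    simp only [← Prod.image_mk_segment_right, ← image_union, segment_eq_uIcc]
    exact image_mono uIcc_subset_uIcc_union_uIcc
  · obtain ⟨rfl, rfl⟩ : a₂ = b₂ ∧ b₂ = c₂ := ⟨hab, hbc⟩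
    simp only [← Prod.image_mk_segment_left, ← image_union, segment_eq_uIcc]
    exact image_mono uIcc_subset_uIcc_union_uIcc

end Aligned

def IsRectChain (P : Set (ℝ × ℝ)) (n : ℕ) (f : ℕ → ℝ × ℝ) : Prop :=
  ∀ t < n, segment ℝ (f t) (f (t + 1)) ⊆ P ∧ AxisParallel (f t) (f (t + 1))

section RectPath

variable {P : Set (ℝ × ℝ)} {p q : ℝ × ℝ} {k : ℕ} {f : ℕ → ℝ × ℝ}

theorem isRectPath_one (hs : segment ℝ p q ⊆ P) (ha : AxisParallel p q) :
    IsRectPath P p q 1 (fun t => if t = 0 then p else q) := by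
  refine ⟨le_rfl, rfl, rfl, fun t ht => ?_⟩
  obtain rfl : t = 0 := by omega
  exact ⟨hs, ha⟩

theorem IsRectPath.cons {p₁ : ℝ × ℝ} (hf : IsRectPath P p₁ q k f) (hs : segment ℝ p p₁ ⊆ P)
    (ha : AxisParallel p p₁) : IsRectPath P p q (k + 1) (fun | 0 => p | t + 1 => f t) := by
  obtain ⟨-, rfl, rfl, hlinks⟩ := hf
  refine ⟨by omega, rfl, rfl, fun t ht => ?_⟩
  cases t with
  | zero => exact ⟨hs, ha⟩
  | succ t => exact hlinks t (by omega)

theorem exists_isRectPath_rld (h : ∃ k f, IsRectPath P p q k f) :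
    ∃ f, IsRectPath P p q (rld P p q) f :=
  Nat.sInf_mem h

theorem rld_le_of_isRectPath (hf : IsRectPath P p q k f) : rld P p q ≤ k :=
  Nat.sInf_le ⟨f, hf⟩

theorem rldDiam_eq {m : ℕ} (hle : ∀ p ∈ P, ∀ q ∈ P, rld P p q ≤ m)
    (hge : ∃ p ∈ P, ∃ q ∈ P, m ≤ rld P p q) : rldDiam P = m := by
  obtain ⟨p, hp, q, hq, h⟩ := hge
  refine IsGreatest.csSup_eq ⟨⟨p, hp, q, hq, (hle p hp q hq).antisymm h⟩, ?_⟩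
  rintro _ ⟨p, hp, q, hq, rfl⟩
  exact hle p hp q hq

end RectPath

section ThetaGraph

variable {H V : Set (Set (ℝ × ℝ))}

theorem thetaGraph_adj_of_mem_family (hHV : Disjoint H V) {o : Bool}
    {x y : ThetaVertex H V} (hx : x.1 ∈ family H V o)
    (hy : y.1 ∈ family H V (!o)) (hxy : (x.1 ∩ y.1).Nonempty) : (thetaGraph H V).Adj x y := by
  have hne : x ≠ y := by
    rintro rfl
    cases o
    · exact disjoint_left.1 hHV hy hx
    · exact disjoint_left.1 hHV hx hy
  cases o
  · exact ⟨hne, Or.inr ⟨hx, hy⟩, hxy⟩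
  · exact ⟨hne, Or.inl ⟨hx, hy⟩, hxy⟩

theorem exists_generic_mem (hgen : HasGenericPoints H V)
    {x y : ThetaVertex H V} (hxy : (thetaGraph H V).Adj x y) :
    ∃ p ∈ x.1 ∩ y.1, ∀ z : ThetaVertex H V, p ∈ z.1 → z = x ∨ z = y := by
  rcases hxy with ⟨-, ⟨hx, hy⟩ | ⟨hx, hy⟩, hne⟩
  · obtain ⟨p, hp, honly⟩ := hgen x.1 hx y.1 hy hne
    exact ⟨p, hp, fun z hz => (honly z.1 z.2 hz).imp Subtype.ext Subtype.ext⟩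
  · rw [inter_comm] at hne ⊢
    obtain ⟨p, hp, honly⟩ := hgen y.1 hy x.1 hx hne
    exact ⟨p, hp, fun z hz => (honly z.1 z.2 hz).symm.imp Subtype.ext Subtype.ext⟩

end ThetaGraph

namespace GoodDecomp

variable {P : Set (ℝ × ℝ)} {H V : Set (Set (ℝ × ℝ))}

theorem finite_vertex (hgood : GoodDecomp P H V) : Finite (ThetaVertex H V) :=
  (hgood.finH.union hgood.finV).to_subtype

theorem ediam_ne_top (hgood : GoodDecomp P H V) : (thetaGraph H V).ediam ≠ ⊤ :=
  have := hgood.finite_vertex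
  have := hgood.conn.nonempty
  SimpleGraph.connected_iff_ediam_ne_top.1 hgood.conn

theorem oDiamTheta_eq (hgood : GoodDecomp P H V) :
    oDiamTheta H V = (thetaGraph H V).diam + 1 := by
  have := hgood.conn.nonempty
  obtain ⟨u, v, huv⟩ := (thetaGraph H V).exists_dist_eq_diam
  refine IsGreatest.csSup_eq ⟨⟨u, v, by rw [oDist, huv]⟩, ?_⟩
  rintro _ ⟨i, j, rfl⟩
  exact Nat.add_le_add_right (SimpleGraph.dist_le_diam hgood.ediam_ne_top) 1

theorem segment_subset (hgood : GoodDecomp P H V) {B : Set (ℝ × ℝ)} (hB : B ∈ H ∪ V)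
    {p q : ℝ × ℝ} (hp : p ∈ B) (hq : q ∈ B) : segment ℝ p q ⊆ P :=
  ((hgood.box B hB).convex.segment_subset hp hq).trans (hgood.sub B hB)

theorem exists_mem_family_segment_subset (hgood : GoodDecomp P H V) {o : Bool} {a b : ℝ × ℝ}
    (hab : Aligned o a b) (hs : segment ℝ a b ⊆ P) : ∃ B ∈ family H V o, segment ℝ a b ⊆ B := by
  cases o
  · exact hgood.covV a b hab hs
  · exact hgood.covH a b hab hs

theorem exists_mem_family (hgood : GoodDecomp P H V) {p : ℝ × ℝ} (hp : p ∈ P) (o : Bool) :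
    ∃ B ∈ family H V o, p ∈ B := by
  have hpp : Aligned o p p := by cases o <;> rfl
  obtain ⟨B, hB, hpB⟩ := hgood.exists_mem_family_segment_subset hpp (by simpa using hp)
  exact ⟨B, hB, by simpa using hpB⟩

theorem mk_mem_inter (hgood : GoodDecomp P H V) {h v : Set (ℝ × ℝ)} (hh : h ∈ H) (hv : v ∈ V)
    (hhv : (h ∩ v).Nonempty) {a b : ℝ × ℝ} (ha : a ∈ v) (hb : b ∈ h) : (a.1, b.2) ∈ h ∩ v := by
  rw [hgood.cross h hh v hv hhv]
  exact ⟨⟨a, ha, rfl⟩, ⟨b, hb, rfl⟩⟩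

/-- A point of `C` outside `B` lies in a box of the other family, and crossing forbids that box
to meet `B`; finitely many closed boxes cannot separate the connected `C`. -/
theorem subset_of_mem_inter (hgood : GoodDecomp P H V) {B C : Set (ℝ × ℝ)} (hBH : B ∈ H)
    (hBV : B ∈ V) (hC : C ∈ H ∪ V) (hCB : (C ∩ B).Nonempty) : C ⊆ B := by
  obtain ⟨z, hzC, hzB⟩ := hCB
  have hpre : IsPreconnected C := (hgood.box C hC).convex.isPreconnected
  have hclosed : ∀ A ∈ H ∪ V, IsClosed A := fun A hA => (hgood.box A hA).isClosed
  rcases hC with hCH | hCV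
  · refine hpre.subset_of_finite_cover_disjoint (hclosed B (.inl hBH)) hgood.finV
      (fun A hA => hclosed A (.inr hA)) ⟨z, hzC, hzB⟩ fun x hx hxB => ?_
    obtain ⟨A, hAV, hxA⟩ := hgood.exists_mem_family (hgood.sub C (.inl hCH) hx) false
    refine ⟨A, hAV, hxA, ?_⟩
    by_contra hAB
    rw [not_disjoint_iff_nonempty_inter, inter_comm] at hAB
    have hx' := hgood.mk_mem_inter hCH hBV ⟨z, hzC, hzB⟩ hzB hx
    exact hxB (hgood.mk_mem_inter hBH hAV hAB hxA hx'.2).1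
  · refine hpre.subset_of_finite_cover_disjoint (hclosed B (.inl hBH)) hgood.finH
      (fun A hA => hclosed A (.inl hA)) ⟨z, hzC, hzB⟩ fun x hx hxB => ?_
    obtain ⟨A, hAH, hxA⟩ := hgood.exists_mem_family (hgood.sub C (.inr hCV) hx) true
    refine ⟨A, hAH, hxA, ?_⟩
    by_contra hAB
    rw [not_disjoint_iff_nonempty_inter] at hAB
    have hx' := hgood.mk_mem_inter hBH hCV ⟨z, hzB, hzC⟩ hx hzB
    exact hxB (hgood.mk_mem_inter hAH hBV hAB hx'.1 hxA).2

theorem vertex_subset_of_mem_inter (hgood : GoodDecomp P H V) {B : Set (ℝ × ℝ)} (hBH : B ∈ H)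
    (hBV : B ∈ V) (X : ThetaVertex H V) : X.1 ⊆ B := by
  obtain ⟨w⟩ := hgood.conn.preconnected X ⟨B, .inl hBH⟩
  suffices ∀ {Y Z} (w : (thetaGraph H V).Walk Y Z), Z.1 ⊆ B → Y.1 ⊆ B from this w subset_rfl
  intro Y Z w
  induction w with
  | nil => exact id
  | cons hadj _ ih =>
    intro hZ
    obtain ⟨z, hzX, hzY⟩ := hadj.2.2
    exact hgood.subset_of_mem_inter hBH hBV (Subtype.property _) ⟨z, hzX, ih hZ hzY⟩

theorem disjoint (hgood : GoodDecomp P H V) (hdiam : 2 < (thetaGraph H V).diam) :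
    Disjoint H V := by
  rw [Set.disjoint_left]
  intro B hBH hBV
  set b : ThetaVertex H V := ⟨B, .inl hBH⟩
  have hb : ∀ X, (thetaGraph H V).dist X b ≤ 1 := by
    intro X
    by_cases hXb : X = b
    · simp [hXb]
    · have hsub := hgood.vertex_subset_of_mem_inter hBH hBV X
      obtain ⟨x, hx⟩ := (hgood.box X.1 X.2).nonempty
      have hadj : (thetaGraph H V).Adj X b :=
        ⟨hXb, X.2.imp (⟨·, hBV⟩) (⟨·, hBH⟩), ⟨x, hx, hsub hx⟩⟩
      exact (SimpleGraph.dist_eq_one_iff_adj.2 hadj).le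
  have := hgood.conn.nonempty
  obtain ⟨u, v, huv⟩ := (thetaGraph H V).exists_dist_eq_diam
  have := calc (thetaGraph H V).dist u v
      _ ≤ (thetaGraph H V).dist u b + (thetaGraph H V).dist b v := hgood.conn.dist_triangle
      _ ≤ 1 + 1 := add_le_add (hb u) (SimpleGraph.dist_comm ▸ hb v)
  omega

theorem dist_ne_of_adj (hgood : GoodDecomp P H V) (hHV : Disjoint H V)
    (u : ThetaVertex H V) {v w : ThetaVertex H V}
    (h : (thetaGraph H V).Adj v w) : (thetaGraph H V).dist u v ≠ (thetaGraph H V).dist u w := by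
  classical
  let c : (thetaGraph H V).Coloring Bool := SimpleGraph.Coloring.mk (fun x => decide (x.1 ∈ H))
    fun {x y} hxy => by
      rcases hxy.2.1 with ⟨hx, hy⟩ | ⟨hx, hy⟩
      · simp [hx, disjoint_right.1 hHV hy]
      · simp [hy, disjoint_right.1 hHV hx]
  exact c.dist_ne_of_adj hgood.conn u h

theorem exists_adj_mem (hgood : GoodDecomp P H V) (hHV : Disjoint H V) {p : ℝ × ℝ}
    (hp : p ∈ P) : ∃ x x' : ThetaVertex H V,
      (thetaGraph H V).Adj x x' ∧ p ∈ x.1 ∧ p ∈ x'.1 := by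
  obtain ⟨h, hh, hph⟩ := hgood.exists_mem_family hp true
  obtain ⟨v, hv, hpv⟩ := hgood.exists_mem_family hp false
  exact ⟨⟨h, .inl hh⟩, ⟨v, .inr hv⟩,
    thetaGraph_adj_of_mem_family (o := true) hHV hh hv ⟨p, hph, hpv⟩, hph, hpv⟩

theorem exists_corner (hgood : GoodDecomp P H V) {x y : ThetaVertex H V}
    (hxy : x = y ∨ (thetaGraph H V).Adj x y) {p q : ℝ × ℝ} (hp : p ∈ x.1) (hq : q ∈ y.1) :
    ∃ r ∈ x.1 ∩ y.1, AxisParallel p r ∧ AxisParallel r q := by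
  rcases hxy with rfl | ⟨-, ⟨hxH, hyV⟩ | ⟨hxV, hyH⟩, hxy⟩
  · exact ⟨(q.1, p.2), ⟨(hgood.box _ x.2).mk_mem hp hq, (hgood.box _ x.2).mk_mem hp hq⟩,
      Or.inl rfl, Or.inr rfl⟩
  · exact ⟨(q.1, p.2), hgood.mk_mem_inter hxH hyV hxy hq hp, Or.inl rfl, Or.inr rfl⟩
  · rw [inter_comm] at hxy ⊢
    exact ⟨(p.1, q.2), hgood.mk_mem_inter hyH hxV hxy hp hq, Or.inr rfl, Or.inl rfl⟩

theorem exists_isRectPath_two (hgood : GoodDecomp P H V) {x y : ThetaVertex H V}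
    (hxy : x = y ∨ (thetaGraph H V).Adj x y) {p q : ℝ × ℝ} (hp : p ∈ x.1) (hq : q ∈ y.1) :
    ∃ f, IsRectPath P p q 2 f := by
  obtain ⟨r, ⟨hrx, hry⟩, hpr, hrq⟩ := hgood.exists_corner hxy hp hq
  exact ⟨_, (isRectPath_one (hgood.segment_subset y.2 hry hq) hrq).cons
    (hgood.segment_subset x.2 hp hrx) hpr⟩

theorem exists_isRectPath_of_walk (hgood : GoodDecomp P H V) :
    ∀ {x y : ThetaVertex H V} (w : (thetaGraph H V).Walk x y), 0 < w.length →
      ∀ {p q : ℝ × ℝ}, p ∈ x.1 → q ∈ y.1 → ∃ f, IsRectPath P p q (w.length + 1) f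
  | _, _, .nil, h, _, _, _, _ => absurd h (lt_irrefl 0)
  | _, _, .cons hxy .nil, _, _, _, hp, hq => hgood.exists_isRectPath_two (.inr hxy) hp hq
  | x, _, .cons hxy (.cons hyz w), _, p, q, hp, hq => by
    obtain ⟨z, -, hzy⟩ := hxy.2.2
    obtain ⟨r, ⟨hrx, hry⟩, hpr, -⟩ := hgood.exists_corner (.inr hxy) hp hzy
    obtain ⟨f, hf⟩ := hgood.exists_isRectPath_of_walk (.cons hyz w) (by simp) hry hq
    exact ⟨_, hf.cons (hgood.segment_subset x.2 hp hrx) hpr⟩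

theorem exists_isRectPath (hgood : GoodDecomp P H V) {x y : ThetaVertex H V}
    {p q : ℝ × ℝ} (hp : p ∈ x.1) (hq : q ∈ y.1) :
    ∃ f, IsRectPath P p q (max ((thetaGraph H V).dist x y + 1) 2) f := by
  by_cases hxy : x = y
  · simpa [hxy] using hgood.exists_isRectPath_two (.inl hxy) hp hq
  · obtain ⟨w, hw⟩ := hgood.conn.exists_walk_length_eq_dist x y
    have hpos : 0 < w.length := hw ▸ hgood.conn.pos_dist_of_ne hxy
    rw [← hw, max_eq_left (by omega)]
    exact hgood.exists_isRectPath_of_walk w hpos hp hq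

theorem rld_le (hgood : GoodDecomp P H V) {x y : ThetaVertex H V}
    {p q : ℝ × ℝ} (hp : p ∈ x.1) (hq : q ∈ y.1) :
    rld P p q ≤ max ((thetaGraph H V).dist x y + 1) 2 :=
  let ⟨_, hf⟩ := hgood.exists_isRectPath hp hq
  rld_le_of_isRectPath hf

/-- Two consecutive links of the same orientation are merged into one; otherwise the box carrying
the first link and the box found for the rest of the chain have different families and meet. -/
theorem exists_dist_le_of_chain (hgood : GoodDecomp P H V) (hHV : Disjoint H V) (n : ℕ) :
    ∀ f : ℕ → ℝ × ℝ, IsRectChain P (n + 1) f → ∀ o, Aligned o (f 0) (f 1) →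
      ∃ i j : ThetaVertex H V, i.1 ∈ family H V o ∧ f 0 ∈ i.1 ∧ f (n + 1) ∈ j.1 ∧
        (thetaGraph H V).dist i j ≤ n := by
  induction n with
  | zero =>
    intro f hf o ho
    obtain ⟨B, hB, hsub⟩ := hgood.exists_mem_family_segment_subset ho (hf 0 (by omega)).1
    exact ⟨⟨B, family_subset_union H V o hB⟩, ⟨B, family_subset_union H V o hB⟩, hB,
      hsub (left_mem_segment ℝ _ _), hsub (right_mem_segment ℝ _ _), by simp⟩
  | succ n ih =>
    intro f hf o ho
    rcases (hf 1 (by omega)).2.aligned_or_aligned_not o with h12 | h12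
    · have hg : IsRectChain P (n + 1) (fun | 0 => f 0 | t + 1 => f (t + 2)) := by
        intro t ht
        cases t with
        | zero =>
          exact ⟨(ho.segment_subset_union h12).trans
            (union_subset (hf 0 (by omega)).1 (hf 1 (by omega)).1), (ho.trans h12).axisParallel⟩
        | succ t => exact hf (t + 2) (by omega)
      obtain ⟨i, j, hi, h0, hj, hd⟩ := ih _ hg o (ho.trans h12)
      exact ⟨i, j, hi, h0, hj, hd.trans n.le_succ⟩
    · obtain ⟨i', j, hi', h1, hj, hd⟩ :=
        ih (fun t => f (t + 1)) (fun t ht => hf (t + 1) (by omega)) (!o) h12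
      obtain ⟨B, hB, hsub⟩ := hgood.exists_mem_family_segment_subset ho (hf 0 (by omega)).1
      let i : ThetaVertex H V := ⟨B, family_subset_union H V o hB⟩
      have hii' : (thetaGraph H V).Adj i i' :=
        thetaGraph_adj_of_mem_family hHV hB hi' ⟨f 1, hsub (right_mem_segment ℝ _ _), h1⟩
      refine ⟨i, j, hB, hsub (left_mem_segment ℝ _ _), hj, ?_⟩
      exact (hgood.conn.dist_le_dist_add_one_left hii' j).trans (by omega)

theorem exists_dist_lt_of_isRectPath (hgood : GoodDecomp P H V) (hHV : Disjoint H V)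
    {p q : ℝ × ℝ} {k : ℕ} {f : ℕ → ℝ × ℝ} (hf : IsRectPath P p q k f) :
    ∃ i j : ThetaVertex H V, p ∈ i.1 ∧ q ∈ j.1 ∧ (thetaGraph H V).dist i j < k := by
  obtain ⟨hk, rfl, rfl, hchain⟩ := hf
  obtain ⟨n, rfl⟩ := Nat.exists_eq_add_of_le' hk
  obtain ⟨o, ho⟩ : ∃ o, Aligned o (f 0) (f 1) :=
    ((hchain 0 (by omega)).2.aligned_or_aligned_not true).elim (⟨_, ·⟩) (⟨_, ·⟩)
  obtain ⟨i, j, -, hi, hj, hd⟩ := hgood.exists_dist_le_of_chain hHV n f hchain o ho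
  exact ⟨i, j, hi, hj, Nat.lt_succ_of_le hd⟩

theorem lt_rld (hgood : GoodDecomp P H V) (hHV : Disjoint H V) {p q : ℝ × ℝ} (hp : p ∈ P)
    (hq : q ∈ P) {m : ℕ} (hm : ∀ i j : ThetaVertex H V, p ∈ i.1 → q ∈ j.1 →
      m ≤ (thetaGraph H V).dist i j) : m < rld P p q := by
  obtain ⟨x, hx, hpx⟩ := hgood.exists_mem_family hp true
  obtain ⟨y, hy, hqy⟩ := hgood.exists_mem_family hq true
  obtain ⟨f, hf⟩ := hgood.exists_isRectPath (x := ⟨x, .inl hx⟩) (y := ⟨y, .inl hy⟩) hpx hqy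
  obtain ⟨g, hg⟩ := exists_isRectPath_rld ⟨_, f, hf⟩
  obtain ⟨i, j, hi, hj, hd⟩ := hgood.exists_dist_lt_of_isRectPath hHV hg
  exact (hm i j hi hj).trans_lt hd

theorem rld_le_diam (hgood : GoodDecomp P H V) (hHV : Disjoint H V)
    (h2 : 2 ≤ (thetaGraph H V).diam) {p q : ℝ × ℝ} (hp : p ∈ P) (hq : q ∈ P) :
    rld P p q ≤ (thetaGraph H V).diam := by
  obtain ⟨x, -, -, hpx, -⟩ := hgood.exists_adj_mem hHV hp
  obtain ⟨y, y', hyy', hqy, hqy'⟩ := hgood.exists_adj_mem hHV hq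
  have hne := hgood.dist_ne_of_adj hHV x hyy'
  have hle := SimpleGraph.dist_le_diam hgood.ediam_ne_top (u := x) (v := y)
  have hle' := SimpleGraph.dist_le_diam hgood.ediam_ne_top (u := x) (v := y')
  have := hgood.rld_le hpx hqy
  have := hgood.rld_le hpx hqy'
  omega

theorem rld_le_diam_sub_one (hgood : GoodDecomp P H V) (hHV : Disjoint H V)
    (h3 : 3 ≤ (thetaGraph H V).diam)
    (hnw : ¬ (thetaGraph H V).HasDiametralEdgePair)
    {p q : ℝ × ℝ} (hp : p ∈ P) (hq : q ∈ P) :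
    rld P p q ≤ (thetaGraph H V).diam - 1 := by
  obtain ⟨x, x', hxx', hpx, hpx'⟩ := hgood.exists_adj_mem hHV hp
  obtain ⟨y, y', hyy', hqy, hqy'⟩ := hgood.exists_adj_mem hHV hq
  have hle := fun a b => SimpleGraph.dist_le_diam hgood.ediam_ne_top (u := a) (v := b)
  have := hle x y; have := hle x y'; have := hle x' y; have := hle x' y'
  have := hgood.rld_le hpx hqy; have := hgood.rld_le hpx hqy'
  have := hgood.rld_le hpx' hqy; have := hgood.rld_le hpx' hqy'
  have := hgood.dist_ne_of_adj hHV x hyy'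
  have := hgood.dist_ne_of_adj hHV x' hyy'
  have hy := hgood.dist_ne_of_adj hHV y hxx'
  have hy' := hgood.dist_ne_of_adj hHV y' hxx'
  simp only [SimpleGraph.dist_comm (u := y)] at hy
  simp only [SimpleGraph.dist_comm (u := y')] at hy'
  by_contra
  -- the four distances lie in `{diam - 1, diam}` and change along the 4-cycle `x y x' y'`
  have : ((thetaGraph H V).dist x y = (thetaGraph H V).diam ∧
      (thetaGraph H V).dist x' y' = (thetaGraph H V).diam) ∨
      ((thetaGraph H V).dist x y' = (thetaGraph H V).diam ∧
      (thetaGraph H V).dist x' y = (thetaGraph H V).diam) := by omega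
  rcases this with ⟨h1, h2⟩ | ⟨h1, h2⟩
  · exact hnw ⟨x, x', y, y', hxx', hyy', h1, h2⟩
  · exact hnw ⟨x, x', y', y, hxx', hyy'.symm, h1, h2⟩

theorem exists_lt_rld (hgood : GoodDecomp P H V) (hHV : Disjoint H V)
    (hgen : HasGenericPoints H V)
    {i i' j j' : ThetaVertex H V} (hi : (thetaGraph H V).Adj i i')
    (hj : (thetaGraph H V).Adj j j') {m : ℕ}
    (hm : ∀ a b, (a = i ∨ a = i') → (b = j ∨ b = j') → m ≤ (thetaGraph H V).dist a b) :
    ∃ p ∈ P, ∃ q ∈ P, m < rld P p q := by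
  obtain ⟨p, hpi, hp⟩ := exists_generic_mem hgen hi
  obtain ⟨q, hqj, hq⟩ := exists_generic_mem hgen hj
  refine ⟨p, hgood.sub _ i.2 hpi.1, q, hgood.sub _ j.2 hqj.1, ?_⟩
  exact hgood.lt_rld hHV (hgood.sub _ i.2 hpi.1) (hgood.sub _ j.2 hqj.1)
    fun a b ha hb => hm a b (hp a ha) (hq b hb)

theorem exists_diam_le_rld (hgood : GoodDecomp P H V) (hHV : Disjoint H V)
    (hgen : HasGenericPoints H V) (hw : (thetaGraph H V).HasDiametralEdgePair) :
    ∃ p ∈ P, ∃ q ∈ P, (thetaGraph H V).diam ≤ rld P p q := by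
  obtain ⟨i, i', j, j', hi, hj, hij, hij'⟩ := hw
  have h1 := hgood.conn.dist_le_dist_add_one_right hj i
  have h2 := hgood.conn.dist_le_dist_add_one_left hi j
  refine hgood.exists_lt_rld hHV hgen hi hj (m := (thetaGraph H V).diam - 1) ?_ |>.imp
    fun p ⟨hp, q, hq, h⟩ => ⟨hp, q, hq, by omega⟩
  rintro a b (rfl | rfl) (rfl | rfl) <;> omega

theorem exists_diam_sub_one_le_rld (hgood : GoodDecomp P H V) (hHV : Disjoint H V)
    (hgen : HasGenericPoints H V) (hdiam : 1 ≤ (thetaGraph H V).diam) :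
    ∃ p ∈ P, ∃ q ∈ P, (thetaGraph H V).diam - 1 ≤ rld P p q := by
  have := SimpleGraph.nontrivial_of_diam_ne_zero (G := thetaGraph H V) (by omega)
  obtain ⟨i, j, hij⟩ := (thetaGraph H V).exists_dist_eq_diam
  obtain ⟨i', hi⟩ := hgood.conn.preconnected.exists_adj_of_nontrivial i
  obtain ⟨j', hj⟩ := hgood.conn.preconnected.exists_adj_of_nontrivial j
  have h1 := hgood.conn.dist_le_dist_add_one_right hj i
  have h2 := hgood.conn.dist_le_dist_add_one_left hi j
  have h3 := hgood.conn.dist_le_dist_add_one_left hi j'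
  refine hgood.exists_lt_rld hHV hgen hi hj (m := (thetaGraph H V).diam - 2) ?_ |>.imp
    fun p ⟨hp, q, hq, h⟩ => ⟨hp, q, hq, by omega⟩
  rintro a b (rfl | rfl) (rfl | rfl) <;> omega

end GoodDecomp

/-- The diameter dichotomy (geometric form of the paper's Theorem 1). Assuming the
generic-points property and `ôdiam ≥ 4`: if there exist vertices `i, i', j, j'` of `Θ`
with `i` adjacent to `i'` and `j` adjacent to `j'` such that `Ô(i,j) = ôdiam` and
`Ô(i',j') = ôdiam`, then `diam(P) = ôdiam − 1`; otherwise `diam(P) = ôdiam − 2`. -/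
theorem rldDiam_dichotomy (P : Set (ℝ × ℝ)) (H V : Set (Set (ℝ × ℝ)))
    (hgood : GoodDecomp P H V)
    (hgen : ∀ h ∈ H, ∀ v ∈ V, (h ∩ v).Nonempty →
      ∃ x ∈ h ∩ v, ∀ B ∈ H ∪ V, x ∈ B → B = h ∨ B = v)
    (hD : 4 ≤ oDiamTheta H V) :
    ((∃ i i' j j' : {B : Set (ℝ × ℝ) // B ∈ H ∪ V},
        (thetaGraph H V).Adj i i' ∧ (thetaGraph H V).Adj j j' ∧
          oDist H V i j = oDiamTheta H V ∧ oDist H V i' j' = oDiamTheta H V) →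
      rldDiam P = oDiamTheta H V - 1) ∧
    ((¬ ∃ i i' j j' : {B : Set (ℝ × ℝ) // B ∈ H ∪ V},
        (thetaGraph H V).Adj i i' ∧ (thetaGraph H V).Adj j j' ∧
          oDist H V i j = oDiamTheta H V ∧ oDist H V i' j' = oDiamTheta H V) →
      rldDiam P = oDiamTheta H V - 2) := by
  rw [hgood.oDiamTheta_eq] at hD ⊢
  have hHV := hgood.disjoint (by omega)
  simp only [oDist, Nat.add_right_cancel_iff, Nat.add_sub_cancel, Nat.reduceSubDiff]
  refine ⟨fun hw => ?_, fun hnw => ?_⟩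
  · exact rldDiam_eq (fun p hp q hq => hgood.rld_le_diam hHV (by omega) hp hq)
      (hgood.exists_diam_le_rld hHV hgen hw)
  · exact rldDiam_eq (fun p hp q hq => hgood.rld_le_diam_sub_one hHV (by omega) hnw hp hq)
      (hgood.exists_diam_sub_one_le_rld hHV hgen (by omega))
end
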